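/- Let θ = (θ_g, X_g)_{g∈G} be a topological partial action of a topological group G on a compact Hausdorff space X, with enveloping space X_G, and let 2^θ restricted to the hyperspace F(X) of nonempty finite subsets of X be the induced partial action on F(X), with enveloping space F(X)_G. If X_G is a T1 space, then F(X)_G is a T1 space. -/

import Mathlib

/-- The hyperspace `2^X` of nonempty compact subsets of `X`. -/
structure NCompact (X : Type*) [TopologicalSpace X] where
  carrier : Set X
  isCompact' : IsCompact carrier
  nonempty' : carrier.Nonempty

/-- The Vietoris topology on the hyperspace `2^X`, generated by the subbasic open sets
`{A | A ⊆ U}` and `{A | A ∩ U ≠ ∅}` for `U` open in `X`. -/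
instance NCompact.instTopologicalSpace (X : Type*) [TopologicalSpace X] :
    TopologicalSpace (NCompact X) :=
  TopologicalSpace.generateFrom
    {S | ∃ U : Set X, IsOpen U ∧
      (S = {A : NCompact X | A.carrier ⊆ U} ∨ S = {A : NCompact X | (A.carrier ∩ U).Nonempty})}

/-- A topological partial action `θ = (θ_g, X_g)_{g ∈ G}` of a topological group `G` on a
topological space `X`: a family of open sets `dom g = X_g` and maps `map g = θ_g` which
restrict to homeomorphisms `θ_g : X_{g⁻¹} → X_g` (with inverse `θ_{g⁻¹}`), such that
`X_1 = X`, `θ_1 = id`, `θ_g(X_{g⁻¹} ∩ X_h) = X_g ∩ X_{gh}` and `θ_g ∘ θ_h = θ_{gh}` on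
`X_{h⁻¹} ∩ X_{(gh)⁻¹}`.  (The values of `map g` outside `dom g⁻¹` are irrelevant junk.) -/
structure TopPartialAction (G : Type*) (X : Type*) [Group G] [TopologicalSpace G]
    [TopologicalSpace X] where
  dom : G → Set X
  map : G → X → X
  isOpen_dom : ∀ g, IsOpen (dom g)
  dom_one : dom 1 = Set.univ
  map_one : ∀ x, map 1 x = x
  image_dom : ∀ g, map g '' dom g⁻¹ = dom g
  map_inv : ∀ g, ∀ x ∈ dom g⁻¹, map g⁻¹ (map g x) = x
  image_inter : ∀ g h, map g '' (dom g⁻¹ ∩ dom h) = dom g ∩ dom (g * h)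
  map_mul : ∀ g h, ∀ x ∈ dom h⁻¹ ∩ dom (g * h)⁻¹, map g (map h x) = map (g * h) x
  continuousOn_map : ∀ g, ContinuousOn (map g) (dom g⁻¹)

variable {G X : Type*} [Group G] [TopologicalSpace G] [TopologicalSpace X]

/-- The equivalence relation `R` on `G × X` defining the enveloping space `X_G = (G × X)/R`:
`(g,x) R (h,y)` iff `x ∈ X_{g⁻¹h}` and `θ_{h⁻¹g}(x) = y`. -/
def envRel (θ : TopPartialAction G X) (p q : G × X) : Prop :=
  p.2 ∈ θ.dom (p.1⁻¹ * q.1) ∧ θ.map (q.1⁻¹ * p.1) p.2 = q.2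

/-- The relation `2^R` on `G × 2^X` defining the enveloping space `(2^X)_G` of the induced
partial action `2^θ`: `(g,A) 2^R (h,B)` iff `A ⊆ X_{g⁻¹h}` and `θ_{h⁻¹g}(A) = B`. -/
def envRelH (θ : TopPartialAction G X) (p q : G × NCompact X) : Prop :=
  p.2.carrier ⊆ θ.dom (p.1⁻¹ * q.1) ∧ θ.map (q.1⁻¹ * p.1) '' p.2.carrier = q.2.carrier

/-- The hyperspace `F(X)` of nonempty finite subsets of `X`, with the subspace topology
inherited from the Vietoris topology on `2^X`. -/
def FinHyper (X : Type*) [TopologicalSpace X] : Type _ :=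
  {A : NCompact X // A.carrier.Finite}

instance (X : Type*) [TopologicalSpace X] : TopologicalSpace (FinHyper X) :=
  instTopologicalSpaceSubtype

/-- The relation `2^R` on `G × F(X)` defining the enveloping space `F(X)_G` of the induced
partial action on `F(X)`: `(g,A) 2^R (h,B)` iff `A ⊆ X_{g⁻¹h}` and `θ_{h⁻¹g}(A) = B`. -/
def envRelF (θ : TopPartialAction G X) (p q : G × FinHyper X) : Prop :=
  p.2.1.carrier ⊆ θ.dom (p.1⁻¹ * q.1) ∧ θ.map (q.1⁻¹ * p.1) '' p.2.1.carrier = q.2.1.carrier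

/-!
Since `X_G` is T1, every `R`-class `[g, x]` is closed in `G × X`. The relation
`(g, A) 2^R (h, B)` says that every point of `A` has an `R`-partner in `B` and every point of `B`
has one in `A`, so the `2^R`-class of `(g, A)` is the intersection of the sets
`{(h, B) | ({h} × B) ∩ [g, x] ≠ ∅}` for `x ∈ A` with the set
`{(h, B) | {h} × B ⊆ ⋃_{x ∈ A} [g, x]}`.
Both kinds of sets are Vietoris-closed whenever the set of `G × X` they refer to is closed: the
first by the tube lemma (`B` is compact), the second directly from the subbasic sets
`{B | B ∩ U ≠ ∅}`. The union over `A` is closed because `A` is finite.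
-/

open Set

theorem t1Space_quot_iff {α : Type*} [TopologicalSpace α] {r : α → α → Prop}
    (hr : Equivalence r) : T1Space (Quot r) ↔ ∀ a, IsClosed {b | r a b} := by
  have hpre : ∀ a, Quot.mk r ⁻¹' {Quot.mk r a} = {b | r a b} := fun a => by
    ext b
    simp only [mem_preimage, mem_singleton_iff, Quot.eq, hr.eqvGen_iff, mem_ofPred_eq]
    exact ⟨hr.symm, hr.symm⟩
  refine ⟨fun h a => hpre a ▸ isClosed_singleton.preimage continuous_quot_mk, fun h => ⟨?_⟩⟩
  refine Quot.mk_surjective.forall.2 fun a => ?_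
  rw [← isQuotientMap_quot_mk.isClosed_preimage, hpre]
  exact h a

namespace NCompact

variable {Y : Type*} [TopologicalSpace Y]

theorem isOpen_setOf_carrier_subset {U : Set X} (hU : IsOpen U) :
    IsOpen {A : NCompact X | A.carrier ⊆ U} :=
  TopologicalSpace.isOpen_generateFrom_of_mem ⟨U, hU, Or.inl rfl⟩

theorem isOpen_setOf_carrier_inter_nonempty {U : Set X} (hU : IsOpen U) :
    IsOpen {A : NCompact X | (A.carrier ∩ U).Nonempty} :=
  TopologicalSpace.isOpen_generateFrom_of_mem ⟨U, hU, Or.inr rfl⟩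

theorem isClosed_setOf_exists_mem_carrier {C : Set (Y × X)} (hC : IsClosed C) :
    IsClosed {p : Y × NCompact X | ∃ x ∈ p.2.carrier, (p.1, x) ∈ C} := by
  rw [← isOpen_compl_iff, isOpen_iff_forall_mem_open]
  rintro ⟨y, A⟩ hyA
  have hsub : {y} ×ˢ A.carrier ⊆ Cᶜ := by
    rintro ⟨y', x⟩ ⟨rfl, hx⟩ hxC
    exact hyA ⟨x, hx, hxC⟩
  obtain ⟨V, U, hV, hU, hyV, hAU, hVU⟩ :=
    generalized_tube_lemma isCompact_singleton A.isCompact' hC.isOpen_compl hsub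
  refine ⟨V ×ˢ {A' : NCompact X | A'.carrier ⊆ U}, ?_,
    hV.prod (isOpen_setOf_carrier_subset hU), mk_mem_prod (hyV rfl) hAU⟩
  rintro ⟨y', A'⟩ ⟨hy', hA'⟩ ⟨x, hx, hxC⟩
  exact hVU ⟨hy', hA' hx⟩ hxC

theorem isClosed_setOf_forall_mem_carrier {C : Set (Y × X)} (hC : IsClosed C) :
    IsClosed {p : Y × NCompact X | ∀ x ∈ p.2.carrier, (p.1, x) ∈ C} := by
  rw [← isOpen_compl_iff, isOpen_iff_forall_mem_open]
  rintro ⟨y, A⟩ hyA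
  simp only [mem_compl_iff, mem_ofPred_eq, not_forall, exists_prop] at hyA
  obtain ⟨x, hx, hxC⟩ := hyA
  obtain ⟨V, W, hV, hW, hyV, hxW, hVW⟩ := isOpen_prod_iff.mp hC.isOpen_compl y x hxC
  refine ⟨V ×ˢ {A' : NCompact X | (A'.carrier ∩ W).Nonempty}, ?_,
    hV.prod (isOpen_setOf_carrier_inter_nonempty hW), ⟨hyV, x, hx, hxW⟩⟩
  rintro ⟨y', A'⟩ ⟨hy', x', hx', hx'W⟩ hA'
  exact hVW ⟨hy', hx'W⟩ (hA' x' hx')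

end NCompact

namespace TopPartialAction

variable (θ : TopPartialAction G X)

theorem map_mem_dom {g : G} {x : X} (hx : x ∈ θ.dom g⁻¹) : θ.map g x ∈ θ.dom g :=
  θ.image_dom g ▸ mem_image_of_mem _ hx

theorem mem_dom_mul_inv {g h : G} {x : X} (hx : x ∈ θ.dom g⁻¹)
    (hgx : θ.map g x ∈ θ.dom h⁻¹) : x ∈ θ.dom (h * g)⁻¹ := by
  have hmem : θ.map g⁻¹ (θ.map g x) ∈ θ.dom g⁻¹ ∩ θ.dom (g⁻¹ * h⁻¹) :=
    θ.image_inter g⁻¹ h⁻¹ ▸ mem_image_of_mem _ ⟨by simpa using θ.map_mem_dom hx, hgx⟩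
  rw [θ.map_inv g x hx] at hmem
  simpa [mul_inv_rev] using hmem.2

end TopPartialAction

section EnvelopingRelation

variable {θ : TopPartialAction G X}

theorem envRel_refl (θ : TopPartialAction G X) (p : G × X) : envRel θ p p := by
  simp [envRel, θ.dom_one, θ.map_one]

theorem envRel_symm {p q : G × X} (hpq : envRel θ p q) : envRel θ q p := by
  obtain ⟨g, x⟩ := p
  obtain ⟨h, y⟩ := q
  obtain ⟨hx, rfl⟩ : x ∈ θ.dom (g⁻¹ * h) ∧ θ.map (h⁻¹ * g) x = y := hpq
  have hx' : x ∈ θ.dom (h⁻¹ * g)⁻¹ := by simpa [mul_inv_rev] using hx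
  have hinv := θ.map_inv _ _ hx'
  rw [mul_inv_rev, inv_inv] at hinv
  exact ⟨by simpa [mul_inv_rev] using θ.map_mem_dom hx', hinv⟩

theorem envRel_trans {p q r : G × X} (hpq : envRel θ p q) (hqr : envRel θ q r) :
    envRel θ p r := by
  obtain ⟨g, x⟩ := p
  obtain ⟨h, y⟩ := q
  obtain ⟨k, z⟩ := r
  obtain ⟨hx, rfl⟩ : x ∈ θ.dom (g⁻¹ * h) ∧ θ.map (h⁻¹ * g) x = y := hpq
  obtain ⟨hy, rfl⟩ : θ.map (h⁻¹ * g) x ∈ θ.dom (h⁻¹ * k) ∧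
      θ.map (k⁻¹ * h) (θ.map (h⁻¹ * g) x) = z := hqr
  have hx' : x ∈ θ.dom (h⁻¹ * g)⁻¹ := by simpa [mul_inv_rev] using hx
  have hy' : θ.map (h⁻¹ * g) x ∈ θ.dom (k⁻¹ * h)⁻¹ := by simpa [mul_inv_rev] using hy
  have hcancel : k⁻¹ * h * (h⁻¹ * g) = k⁻¹ * g := by group
  have hdom := θ.mem_dom_mul_inv hx' hy'
  rw [hcancel, mul_inv_rev, inv_inv] at hdom
  refine ⟨hdom, ?_⟩
  rw [θ.map_mul _ _ _ ⟨hx', by rwa [hcancel, mul_inv_rev, inv_inv]⟩, hcancel]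

theorem envRel_equivalence (θ : TopPartialAction G X) : Equivalence (envRel θ) :=
  ⟨envRel_refl θ, envRel_symm, envRel_trans⟩

theorem envRelF_iff {p q : G × FinHyper X} :
    envRelF θ p q ↔
      (∀ x ∈ p.2.1.carrier, ∃ y ∈ q.2.1.carrier, envRel θ (p.1, x) (q.1, y)) ∧
      (∀ y ∈ q.2.1.carrier, ∃ x ∈ p.2.1.carrier, envRel θ (p.1, x) (q.1, y)) := by
  obtain ⟨g, A⟩ := p
  obtain ⟨h, B⟩ := q
  constructor
  · rintro ⟨hsub, hAB⟩
    rw [← hAB]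
    exact ⟨fun x hx => ⟨_, mem_image_of_mem _ hx, hsub hx, rfl⟩,
      fun _ ⟨x, hx, hxy⟩ => ⟨x, hx, hsub hx, hxy⟩⟩
  · rintro ⟨hfwd, hbwd⟩
    refine ⟨fun x hx => (hfwd x hx).choose_spec.2.1, ?_⟩
    apply Subset.antisymm
    · rintro _ ⟨x, hx, rfl⟩
      obtain ⟨y, hy, -, hxy⟩ := hfwd x hx
      exact hxy ▸ hy
    · intro y hy
      obtain ⟨x, hx, -, hxy⟩ := hbwd y hy
      exact ⟨x, hx, hxy⟩

theorem envRelF_equivalence (θ : TopPartialAction G X) : Equivalence (envRelF θ) := by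
  refine ⟨fun p => ?_, fun hpq => ?_, fun hpq hqr => ?_⟩
  · exact envRelF_iff.2
      ⟨fun x hx => ⟨x, hx, envRel_refl θ _⟩, fun x hx => ⟨x, hx, envRel_refl θ _⟩⟩
  · obtain ⟨hfwd, hbwd⟩ := envRelF_iff.1 hpq
    exact envRelF_iff.2 ⟨fun y hy => (hbwd y hy).imp fun _ h => ⟨h.1, envRel_symm h.2⟩,
      fun x hx => (hfwd x hx).imp fun _ h => ⟨h.1, envRel_symm h.2⟩⟩
  · obtain ⟨hfwd₁, hbwd₁⟩ := envRelF_iff.1 hpq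
    obtain ⟨hfwd₂, hbwd₂⟩ := envRelF_iff.1 hqr
    refine envRelF_iff.2 ⟨fun x hx => ?_, fun z hz => ?_⟩
    · obtain ⟨y, hy, hxy⟩ := hfwd₁ x hx
      obtain ⟨z, hz, hyz⟩ := hfwd₂ y hy
      exact ⟨z, hz, envRel_trans hxy hyz⟩
    · obtain ⟨y, hy, hyz⟩ := hbwd₂ z hz
      obtain ⟨x, hx, hxy⟩ := hbwd₁ y hy
      exact ⟨x, hx, envRel_trans hxy hyz⟩

theorem setOf_envRelF_eq (g : G) (A : FinHyper X) :
    {q : G × FinHyper X | envRelF θ (g, A) q} =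
      (⋂ x ∈ A.1.carrier, {q | ∃ y ∈ q.2.1.carrier, envRel θ (g, x) (q.1, y)}) ∩
        {q | ∀ y ∈ q.2.1.carrier,
          (q.1, y) ∈ ⋃ x ∈ A.1.carrier, {p | envRel θ (g, x) p}} := by
  ext q
  simp only [mem_ofPred_eq, envRelF_iff, mem_inter_iff, mem_iInter, mem_iUnion, exists_prop]

theorem isClosed_setOf_envRelF (hclosed : ∀ p, IsClosed {q | envRel θ p q}) (g : G)
    (A : FinHyper X) : IsClosed {q : G × FinHyper X | envRelF θ (g, A) q} := by
  have hval : Continuous fun q : G × FinHyper X => (q.1, q.2.1) :=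
    continuous_fst.prodMk (continuous_subtype_val.comp continuous_snd)
  rw [setOf_envRelF_eq]
  refine (isClosed_biInter fun x _ => ?_).inter ?_
  · exact (NCompact.isClosed_setOf_exists_mem_carrier (hclosed (g, x))).preimage hval
  · exact (NCompact.isClosed_setOf_forall_mem_carrier
      (A.2.isClosed_biUnion fun x _ => hclosed (g, x))).preimage hval

end EnvelopingRelation

theorem t1_envelopingSpace_finiteHyperspace_general
    {G X : Type*} [Group G] [TopologicalSpace G]
    [TopologicalSpace X]
    (θ : TopPartialAction G X)
    (hT1 : T1Space (Quot (envRel θ))) :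
    T1Space (Quot (envRelF θ)) := by
  rw [t1Space_quot_iff (envRel_equivalence θ)] at hT1
  rw [t1Space_quot_iff (envRelF_equivalence θ)]
  rintro ⟨g, A⟩
  exact isClosed_setOf_envRelF hT1 g A

/-- Let `θ` be a topological partial action of a topological group `G` on a compact Hausdorff
space `X`, with enveloping space `X_G`, and let `F(X)_G` be the enveloping space of the
induced partial action on the hyperspace `F(X)` of nonempty finite subsets of `X`.  If
`X_G` is `T1`, then `F(X)_G` is `T1`. -/
theorem t1_envelopingSpace_finiteHyperspace
    {G X : Type*} [Group G] [TopologicalSpace G] [IsTopologicalGroup G]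
    [TopologicalSpace X] [CompactSpace X] [T2Space X]
    (θ : TopPartialAction G X)
    (hT1 : T1Space (Quot (envRel θ))) :
    T1Space (Quot (envRelF θ)) :=
  t1_envelopingSpace_finiteHyperspace_general θ hT1
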